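/- Let G ∼ N(0, Iₙ) and let X be a random vector in ℝⁿ with X ≼_cx G. Then X is the weak limit of a sequence of finitely supported random vectors X_k in ℝⁿ satisfying X_k ≼_cx G for every k. -/

import Mathlib

open MeasureTheory Real Filter
open scoped ENNReal

/-- The standard Gaussian measure `N(0, Iₙ)` on `ℝⁿ`. -/
noncomputable def stdGaussian (n : ℕ) : Measure (EuclideanSpace ℝ (Fin n)) :=
  (MeasureTheory.Measure.pi fun _ : Fin n => ProbabilityTheory.gaussianReal 0 1).map
    (WithLp.toLp 2)

/-- Convex order for (finite-first-moment) measures on `ℝⁿ`: for every convex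
`f : ℝⁿ → ℝ` whose expectation under `ν` is finite, the expectation under `μ` is finite
and `∫ f dμ ≤ ∫ f dν`. -/
def ConvexOrder {n : ℕ} (μ ν : Measure (EuclideanSpace ℝ (Fin n))) : Prop :=
  ∀ f : EuclideanSpace ℝ (Fin n) → ℝ, ConvexOn ℝ Set.univ f → Integrable f ν →
    Integrable f μ ∧ ∫ x, f x ∂μ ≤ ∫ x, f x ∂ν

/-! Replace `X` by its conditional expectation given the dyadic cube of side `2⁻ᵏ` containing it,
the cubes being clamped to `[-k, k]ⁿ`. There are finitely many cells, so this is finitely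
supported, and Jensen's inequality on each cell dominates it by `X`, hence by `G`, in convex
order. A cell's barycentre lies in the closed convex hull of the cell, and a fixed point eventually
lies in an unclamped cube, of diameter `√n 2⁻ᵏ`; so the approximations converge to `X` almost
surely, hence weakly. -/

open Set Topology

section FiberAverage

variable {α κ E : Type*} [MeasurableSpace α] {q : α → κ}

lemma ae_measure_fiber_ne_zero [MeasurableSpace κ] [MeasurableSingletonClass κ] [Countable κ]
    (ρ : Measure α) (hq : Measurable q) : ∀ᵐ x ∂ρ, ρ (q ⁻¹' {q x}) ≠ 0 := by
  have h : ∀ᵐ i ∂ρ.map q, ρ.map q {i} ≠ 0 := ae_iff_of_countable.2 fun _ hi => hi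
  filter_upwards [ae_of_ae_map hq.aemeasurable h] with x hx
  rwa [Measure.map_apply hq (measurableSet_singleton _)] at hx

lemma integral_eq_sum_setIntegral_fiber [MeasurableSpace κ] [MeasurableSingletonClass κ]
    [Fintype κ] [NormedAddCommGroup E] [NormedSpace ℝ E] {ρ : Measure α} (hq : Measurable q)
    {g : α → E} (hg : Integrable g ρ) :
    ∫ x, g x ∂ρ = ∑ i, ∫ x in q ⁻¹' {i}, g x ∂ρ := by
  calc ∫ x, g x ∂ρ
      _ = ∫ x in ⋃ i ∈ (Finset.univ : Finset κ), q ⁻¹' {i}, g x ∂ρ := by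
        simp [← preimage_iUnion, iUnion_of_singleton]
      _ = _ := integral_biUnion_finset _ (fun i _ => hq (measurableSet_singleton i))
        (pairwiseDisjoint_fiber q _) fun _ _ => hg.integrableOn

variable [NormedAddCommGroup E] [NormedSpace ℝ E] [MeasurableSpace E]

/-- The conditional expectation of the identity given `q`. On a `ρ`-null fibre the average is the
junk value `0`; these fibres form a `ρ`-null set when `κ` is countable. -/
noncomputable def fiberAverage (ρ : Measure E) (q : E → κ) (x : E) : E :=
  ⨍ y in q ⁻¹' {q x}, y ∂ρ

variable {ρ : Measure E} {q : E → κ}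

lemma finite_range_fiberAverage [Finite κ] : (range (fiberAverage ρ q)).Finite :=
  (finite_range _).subset (range_comp_subset_range q fun i => ⨍ y in q ⁻¹' {i}, y ∂ρ)

variable [MeasurableSpace κ] [MeasurableSingletonClass κ]

lemma measurable_fiberAverage [Finite κ] (hq : Measurable q) :
    Measurable (fiberAverage ρ q) :=
  (measurable_of_finite fun i => ⨍ y in q ⁻¹' {i}, y ∂ρ).comp hq

lemma integrable_comp_fiberAverage [Finite κ] [IsFiniteMeasure ρ] (hq : Measurable q)
    (f : E → ℝ) : Integrable (fun x => f (fiberAverage ρ q x)) ρ :=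
  (Integrable.of_finite (μ := ρ.map q)
    (f := fun i => f (⨍ y in q ⁻¹' {i}, y ∂ρ))).comp_measurable hq

lemma setIntegral_comp_fiberAverage_le [CompleteSpace E] [IsFiniteMeasure ρ]
    (hq : Measurable q) (hid : Integrable id ρ) {f : E → ℝ} (hf : ConvexOn ℝ univ f)
    (hfc : Continuous f) (hfi : Integrable f ρ) (i : κ) :
    ∫ x in q ⁻¹' {i}, f (fiberAverage ρ q x) ∂ρ ≤ ∫ x in q ⁻¹' {i}, f x ∂ρ := by
  have hfib : MeasurableSet (q ⁻¹' {i}) := hq (measurableSet_singleton i)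
  rw [setIntegral_congr_fun hfib fun x (hx : q x = i) => by rw [fiberAverage, hx],
    setIntegral_const]
  by_cases h0 : ρ (q ⁻¹' {i}) = 0
  · simp [measureReal_def, h0]
  rw [← measure_smul_setAverage f (measure_ne_top ρ _)]
  exact smul_le_smul_of_nonneg_left (hf.map_set_average_le (f := id) hfc.continuousOn
    isClosed_univ h0 (measure_ne_top ρ _) (ae_of_all _ fun _ => mem_univ _) hid.integrableOn
    hfi.integrableOn) measureReal_nonneg

lemma integral_comp_fiberAverage_le [CompleteSpace E] [Finite κ] [IsFiniteMeasure ρ]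
    (hq : Measurable q) (hid : Integrable id ρ) {f : E → ℝ} (hf : ConvexOn ℝ univ f)
    (hfc : Continuous f) (hfi : Integrable f ρ) :
    ∫ x, f (fiberAverage ρ q x) ∂ρ ≤ ∫ x, f x ∂ρ := by
  have := Fintype.ofFinite κ
  rw [integral_eq_sum_setIntegral_fiber hq (integrable_comp_fiberAverage hq f),
    integral_eq_sum_setIntegral_fiber hq hfi]
  exact Finset.sum_le_sum fun i _ => setIntegral_comp_fiberAverage_le hq hid hf hfc hfi i

lemma dist_fiberAverage_le [CompleteSpace E] [IsFiniteMeasure ρ] (hq : Measurable q)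
    (hid : Integrable id ρ) {x : E} (h0 : ρ (q ⁻¹' {q x}) ≠ 0) {r : ℝ}
    (hr : q ⁻¹' {q x} ⊆ Metric.closedBall x r) :
    dist (fiberAverage ρ q x) x ≤ r :=
  (convex_closedBall x r).set_average_mem Metric.isClosed_closedBall h0 (measure_ne_top ρ _)
    (ae_restrict_of_forall_mem (hq (measurableSet_singleton _)) hr) hid.integrableOn

end FiberAverage

lemma ConvexOrder.trans {n : ℕ} {μ ν τ : Measure (EuclideanSpace ℝ (Fin n))}
    (hμν : ConvexOrder μ ν) (hντ : ConvexOrder ν τ) : ConvexOrder μ τ := fun f hf hfτ =>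
  let ⟨hfν, hle⟩ := hντ f hf hfτ
  let ⟨hfμ, hle'⟩ := hμν f hf hfν
  ⟨hfμ, hle'.trans hle⟩

lemma convexOrder_map_fiberAverage {n : ℕ} {κ : Type*} [MeasurableSpace κ]
    [MeasurableSingletonClass κ] [Finite κ] {ρ : Measure (EuclideanSpace ℝ (Fin n))}
    [IsFiniteMeasure ρ] {q : EuclideanSpace ℝ (Fin n) → κ} (hq : Measurable q)
    (hid : Integrable id ρ) : ConvexOrder (ρ.map (fiberAverage ρ q)) ρ := by
  intro f hf hfi
  have hfc : Continuous f := continuousOn_univ.1 (hf.continuousOn isOpen_univ)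
  have hφ : AEMeasurable (fiberAverage ρ q) ρ := (measurable_fiberAverage hq).aemeasurable
  refine ⟨(integrable_map_measure hfc.aestronglyMeasurable hφ).2
    (integrable_comp_fiberAverage hq f), ?_⟩
  rw [integral_map hφ hfc.aestronglyMeasurable]
  exact integral_comp_fiberAverage_le hq hid hf hfc hfi

section Dyadic

variable {ι : Type*}

/-- The index of the dyadic cube of side `2⁻ᵏ` containing `x`, clamped to the box `[-k, k]ⁿ`. -/
noncomputable def dyadicLabel (k : ℕ) (x : EuclideanSpace ℝ ι) :
    ι → Icc (-(k * 2 ^ k : ℤ)) (k * 2 ^ k) :=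
  fun i => projIcc _ _ (neg_le_self (by positivity)) ⌊(2 : ℝ) ^ k * x i⌋

lemma measurable_dyadicLabel (k : ℕ) : Measurable (dyadicLabel (ι := ι) k) :=
  measurable_pi_lambda _ fun i => measurable_from_top.comp
    (measurable_const.mul ((measurable_pi_apply i).comp (WithLp.measurable_ofLp 2 _))).floor

lemma abs_sub_lt_of_dyadicLabel_eq {k : ℕ} {x y : EuclideanSpace ℝ ι}
    (hx : ∀ i, |x i| + 1 ≤ k) (hxy : dyadicLabel k y = dyadicLabel k x) (i : ι) :
    |y i - x i| < (2 ^ k)⁻¹ := by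
  have h2k : (1 : ℝ) ≤ 2 ^ k := one_le_pow₀ one_le_two
  have hlo : -(k * 2 ^ k : ℤ) < ⌊(2 : ℝ) ^ k * x i⌋ := by
    rw [Int.lt_iff_add_one_le, Int.le_floor]
    push_cast
    nlinarith [neg_abs_le (x i), hx i]
  have hhi : ⌊(2 : ℝ) ^ k * x i⌋ < k * 2 ^ k := by
    rw [Int.floor_lt]
    push_cast
    nlinarith [le_abs_self (x i), hx i]
  have hfloor : ⌊(2 : ℝ) ^ k * y i⌋ = ⌊(2 : ℝ) ^ k * x i⌋ := by
    have h := congrArg Subtype.val (congrFun hxy i)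
    simp only [dyadicLabel, coe_projIcc] at h
    omega
  have h := Int.abs_sub_lt_one_of_floor_eq_floor hfloor
  rw [← mul_sub, abs_mul, abs_of_pos (by positivity)] at h
  rwa [← one_div, lt_div_iff₀' (by positivity)]

lemma eventually_dyadicFiber_subset_closedBall [Fintype ι] (x : EuclideanSpace ℝ ι) {ε : ℝ}
    (hε : 0 < ε) : ∀ᶠ k : ℕ in atTop,
      dyadicLabel k ⁻¹' {dyadicLabel k x} ⊆ Metric.closedBall x ε := by
  obtain ⟨C, hC0, hC⟩ : ∃ C : ℝ, 0 ≤ C ∧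
      ∀ y z : EuclideanSpace ℝ ι, dist y z ≤ C * dist y.ofLp z.ofLp :=
    ⟨_, NNReal.coe_nonneg _, (PiLp.antilipschitzWith_ofLp 2 _).le_mul_dist⟩
  have hsmall : Tendsto (fun k : ℕ => C * ((2 : ℝ) ^ k)⁻¹) atTop (𝓝 0) := by
    simpa using (tendsto_inv_atTop_zero.comp
      (tendsto_pow_atTop_atTop_of_one_lt one_lt_two)).const_mul C
  filter_upwards [hsmall.eventually (ge_mem_nhds hε), eventually_all.2 fun i =>
    tendsto_natCast_atTop_atTop.eventually_ge_atTop (|x i| + 1)] with k hk hx y hy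
  refine (hC y x).trans (le_trans (mul_le_mul_of_nonneg_left ?_ hC0) hk)
  exact (dist_pi_le_iff (by positivity)).2 fun i =>
    (abs_sub_lt_of_dyadicLabel_eq hx hy i).le

lemma tendsto_fiberAverage_dyadicLabel [Fintype ι] {ρ : Measure (EuclideanSpace ℝ ι)}
    [IsFiniteMeasure ρ] (hid : Integrable id ρ) {x : EuclideanSpace ℝ ι}
    (h0 : ∀ k, ρ (dyadicLabel k ⁻¹' {dyadicLabel k x}) ≠ 0) :
    Tendsto (fun k => fiberAverage ρ (dyadicLabel k) x) atTop (𝓝 x) := by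
  refine Metric.tendsto_nhds.2 fun ε hε => ?_
  filter_upwards [eventually_dyadicFiber_subset_closedBall x (half_pos hε)] with k hk
  exact (dist_fiberAverage_le (measurable_dyadicLabel k) hid (h0 k) hk).trans_lt
    (half_lt_self hε)

end Dyadic

lemma tendsto_integral_map_of_ae_tendsto {α : Type*} [MeasurableSpace α] [TopologicalSpace α]
    [OpensMeasurableSpace α] {ρ : Measure α} [IsFiniteMeasure ρ] {φ : ℕ → α → α}
    (hφ : ∀ k, Measurable (φ k)) (hlim : ∀ᵐ x ∂ρ, Tendsto (φ · x) atTop (𝓝 x))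
    (f : BoundedContinuousFunction α ℝ) :
    Tendsto (fun k => ∫ x, f x ∂(ρ.map (φ k))) atTop (𝓝 (∫ x, f x ∂ρ)) := by
  refine (tendsto_integral_of_dominated_convergence (fun _ => ‖f‖)
    (fun k => (f.continuous.measurable.comp (hφ k)).aestronglyMeasurable) (integrable_const _)
    (fun k => ae_of_all _ fun x => f.norm_coe_le_norm _)
    (hlim.mono fun x hx => (f.continuous.tendsto x).comp hx)).congr fun k => ?_
  exact (integral_map (hφ k).aemeasurable f.continuous.aestronglyMeasurable).symm

lemma exists_finset_map_compl_eq_zero {α β : Type*} [MeasurableSpace α] [MeasurableSpace β]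
    [MeasurableSingletonClass β] {ρ : Measure α} {φ : α → β} (hφ : Measurable φ)
    (hfin : (range φ).Finite) : ∃ S : Finset β, ρ.map φ (↑S)ᶜ = 0 :=
  ⟨hfin.toFinset, by
    rw [Measure.map_apply hφ hfin.toFinset.finite_toSet.measurableSet.compl]
    simp⟩

/-- Any random vector `X` with `X ≼_cx G`, `G ∼ N(0, Iₙ)`, is the weak limit of finitely
supported random vectors `X_k` with `X_k ≼_cx G`. -/
theorem statement_10 (n : ℕ) (Ω : Type) (_ : MeasurableSpace Ω) (P : Measure Ω)
    (hP : IsProbabilityMeasure P) (X : Ω → EuclideanSpace ℝ (Fin n))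
    (hX : Measurable X) (hint : Integrable X P)
    (hdom : ConvexOrder (Measure.map X P) (stdGaussian n)) :
    ∃ μ : ℕ → Measure (EuclideanSpace ℝ (Fin n)),
      (∀ k, IsProbabilityMeasure (μ k)) ∧
      (∀ k, ∃ S : Finset (EuclideanSpace ℝ (Fin n)), μ k ((↑S : Set _)ᶜ) = 0) ∧
      (∀ k, ConvexOrder (μ k) (stdGaussian n)) ∧
      (∀ f : BoundedContinuousFunction (EuclideanSpace ℝ (Fin n)) ℝ,
        Tendsto (fun k => ∫ x, f x ∂(μ k)) atTop (nhds (∫ x, f x ∂(Measure.map X P)))) := by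
  set ρ := Measure.map X P
  have hρ : IsProbabilityMeasure ρ := Measure.isProbabilityMeasure_map hX.aemeasurable
  have hid : Integrable id ρ :=
    (integrable_map_measure aestronglyMeasurable_id hX.aemeasurable).2 hint
  have hq := measurable_dyadicLabel (ι := Fin n)
  have hφ k : Measurable (fiberAverage ρ (dyadicLabel k)) := measurable_fiberAverage (hq k)
  refine ⟨fun k => ρ.map (fiberAverage ρ (dyadicLabel k)),
    fun k => Measure.isProbabilityMeasure_map (hφ k).aemeasurable,
    fun k => exists_finset_map_compl_eq_zero (hφ k) finite_range_fiberAverage,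
    fun k => (convexOrder_map_fiberAverage (hq k) hid).trans hdom,
    tendsto_integral_map_of_ae_tendsto hφ ?_⟩
  filter_upwards [ae_all_iff.2 fun k => ae_measure_fiber_ne_zero ρ (hq k)] with x hx
  exact tendsto_fiberAverage_dyadicLabel hid hx
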